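/- arXiv:1602.04732 — 5 statements merged into one kernel-verified Lean document; each statement's English description precedes it below -/
import Mathlib

section
/- For every integer k, let p = 2^k / (2^k + |1 - 2^k|), where 2^k is the real number given by the integer power. Then p = 1 if and only if k = 0, and if k ≠ 0 then p ≤ 2/3. -/
/-!
Since `2 ^ k > 0`, the weight is `x / (x + |1 - x|)` with `x = 2 ^ k > 0`: it equals `x` when
`x ≤ 1` and `x / (2x - 1)` when `x ≥ 1`, so it is `1` exactly at `x = 1`. For `k ≠ 0` the power
`2 ^ k` lies outside the open interval `(1/2, 2)`, where the weight is at most `2/3`.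
-/

lemma div_add_abs_one_sub_eq_one_iff {x : ℝ} (hx : 0 < x) :
    x / (x + |1 - x|) = 1 ↔ x = 1 := by
  have hden : 0 < x + |1 - x| := by positivity
  rw [div_eq_one_iff_eq hden.ne', left_eq_add, abs_eq_zero, sub_eq_zero, eq_comm]

lemma div_add_abs_one_sub_le_two_thirds {x : ℝ} (hx : 0 < x) (h : x ≤ 1 / 2 ∨ 2 ≤ x) :
    x / (x + |1 - x|) ≤ 2 / 3 := by
  rcases h with hle | hge
  · rw [abs_of_nonneg (by linarith), add_sub_cancel, div_one]
    linarith
  · rw [abs_of_nonpos (by linarith), div_le_div_iff₀ (by linarith) (by norm_num)]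
    linarith

lemma zpow_le_inv_or_le_zpow {a : ℝ} (ha : 1 ≤ a) {k : ℤ} (hk : k ≠ 0) :
    a ^ k ≤ a⁻¹ ∨ a ≤ a ^ k := by
  rcases hk.lt_or_gt with hneg | hpos
  · left
    simpa using zpow_le_zpow_right₀ ha (show k ≤ -1 by omega)
  · right
    simpa using zpow_le_zpow_right₀ ha (show 1 ≤ k by omega)

theorem stmt_1 (k : ℤ) :
    ((2 : ℝ) ^ k / ((2 : ℝ) ^ k + |1 - (2 : ℝ) ^ k|) = 1 ↔ k = 0) ∧
    (k ≠ 0 → (2 : ℝ) ^ k / ((2 : ℝ) ^ k + |1 - (2 : ℝ) ^ k|) ≤ 2 / 3) := by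
  have hpos : (0 : ℝ) < 2 ^ k := by positivity
  refine ⟨?_, fun hk => ?_⟩
  · rw [div_add_abs_one_sub_eq_one_iff hpos, zpow_eq_one_iff_right₀ (by norm_num) (by norm_num)]
  · apply div_add_abs_one_sub_le_two_thirds hpos
    simpa [one_div] using zpow_le_inv_or_le_zpow (a := (2 : ℝ)) (by norm_num) hk
end

section
/- Let λ₁, λ₂ ∈ (0,1) be real numbers and let A, R, c be real numbers with A ≥ 0, R ≥ 0, c ≥ 0 and A + R ≥ 1. Define A' = (λ₂/λ₁)·A + λ₂·c and R' = ((1-λ₂)/(1-λ₁))·R + (1-λ₂)·c. Then A' + R' > 0, and moreover: A'/(A'+R') > λ₂ if and only if A/(A+R) > λ₁; A'/(A'+R') = λ₂ if and only if A/(A+R) = λ₁; and A'/(A'+R') < λ₂ if and only if A/(A+R) < λ₁. -/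
theorem stmt_5 (l₁ l₂ : ℝ) (hl₁ : l₁ ∈ Set.Ioo (0 : ℝ) 1) (hl₂ : l₂ ∈ Set.Ioo (0 : ℝ) 1)
    (A R c : ℝ) (hA : 0 ≤ A) (hR : 0 ≤ R) (hc : 0 ≤ c) (hAR : 1 ≤ A + R) :
    let A' := (l₂ / l₁) * A + l₂ * c
    let R' := ((1 - l₂) / (1 - l₁)) * R + (1 - l₂) * c
    0 < A' + R' ∧
    (A' / (A' + R') > l₂ ↔ A / (A + R) > l₁) ∧
    (A' / (A' + R') = l₂ ↔ A / (A + R) = l₁) ∧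
    (A' / (A' + R') < l₂ ↔ A / (A + R) < l₁) := by
  obtain ⟨h1a, h1b⟩ := hl₁
  obtain ⟨h2a, h2b⟩ := hl₂
  intro A' R'
  have h1' : (0:ℝ) < 1 - l₁ := by linarith
  have h2' : (0:ℝ) < 1 - l₂ := by linarith
  have hS : (0:ℝ) < A + R := by linarith
  have hd1 : 0 < l₂ / l₁ := div_pos h2a h1a
  have hd2 : 0 < (1 - l₂) / (1 - l₁) := div_pos h2' h1'
  set k : ℝ := (l₂ * (1 - l₂)) / (l₁ * (1 - l₁)) with hkdef
  have hk : 0 < k := div_pos (mul_pos h2a h2') (mul_pos h1a h1')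
  have key : A' - l₂ * (A' + R') = k * (A - l₁ * (A + R)) := by
    show (l₂ / l₁) * A + l₂ * c - l₂ * (((l₂ / l₁) * A + l₂ * c) +
      (((1 - l₂) / (1 - l₁)) * R + (1 - l₂) * c)) = _
    rw [hkdef]
    field_simp
    ring
  have hS' : 0 < A' + R' := by
    show 0 < (l₂ / l₁) * A + l₂ * c + (((1 - l₂) / (1 - l₁)) * R + (1 - l₂) * c)
    rcases le_or_gt A R with h | h
    · have hR2 : (1:ℝ)/2 ≤ R := by linarith
      nlinarith [mul_nonneg hd1.le hA, mul_nonneg h2a.le hc, mul_nonneg h2'.le hc,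
        mul_le_mul_of_nonneg_left hR2 hd2.le]
    · have hA2 : (1:ℝ)/2 ≤ A := by linarith
      nlinarith [mul_nonneg hd2.le hR, mul_nonneg h2a.le hc, mul_nonneg h2'.le hc,
        mul_le_mul_of_nonneg_left hA2 hd1.le]
  have transfer : ∀ x : ℝ, (0 < k * x ↔ 0 < x) ∧ (k * x = 0 ↔ x = 0) := by
    intro x
    constructor
    · constructor
      · intro h
        rcases mul_pos_iff.mp h with ⟨_, hx⟩ | ⟨hk', _⟩
        · exact hx
        · linarith
      · intro h; exact mul_pos hk h
    · constructor
      · intro h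
        rcases mul_eq_zero.mp h with h | h
        · exact absurd h (ne_of_gt hk)
        · exact h
      · intro h; rw [h, mul_zero]
  refine ⟨hS', ?_, ?_, ?_⟩
  · rw [gt_iff_lt, lt_div_iff₀ hS', gt_iff_lt, lt_div_iff₀ hS]
    constructor
    · intro h
      have := ((transfer (A - l₁ * (A + R))).1).mp (by linarith [key])
      linarith
    · intro h
      have := mul_pos hk (show 0 < A - l₁ * (A + R) by linarith)
      linarith [key]
  · rw [div_eq_iff (ne_of_gt hS'), div_eq_iff (ne_of_gt hS)]
    constructor
    · intro h
      have := ((transfer (A - l₁ * (A + R))).2).mp (by linarith [key])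
      linarith
    · intro h
      have : k * (A - l₁ * (A + R)) = 0 := by
        rw [show A - l₁ * (A + R) = 0 by linarith, mul_zero]
      linarith [key]
  · rw [div_lt_iff₀ hS', div_lt_iff₀ hS]
    constructor
    · intro h
      have hneg : 0 < k * (l₁ * (A + R) - A) := by
        have : k * (A - l₁ * (A + R)) < 0 := by linarith [key]
        nlinarith
      have := ((transfer (l₁ * (A + R) - A)).1).mp hneg
      linarith
    · intro h
      have := mul_pos hk (show 0 < l₁ * (A + R) - A by linarith)
      nlinarith [key]
end

section
/- For all natural numbers x, y, z, the real number Δ = x²·(|y² - z| - |1 - y² + z|) - y is strictly positive if and only if x² > y and y² > z. -/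
theorem stmt_9 (x y z : ℕ) :
    0 < (x : ℝ) ^ 2 * (|(y : ℝ) ^ 2 - (z : ℝ)| - |1 - (y : ℝ) ^ 2 + (z : ℝ)|) - (y : ℝ) ↔
      (y < x ^ 2 ∧ z < y ^ 2) := by
  rcases lt_or_ge z (y ^ 2) with h | h
  · have h1 : (z : ℝ) + 1 ≤ (y : ℝ) ^ 2 := by exact_mod_cast Nat.succ_le_of_lt h
    rw [abs_of_nonneg (by linarith), abs_of_nonpos (by linarith)]
    constructor
    · intro hx
      refine ⟨?_, h⟩
      have : (y : ℝ) < (x : ℝ) ^ 2 := by nlinarith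
      exact_mod_cast this
    · intro ⟨hy, _⟩
      have : (y : ℝ) < (x : ℝ) ^ 2 := by exact_mod_cast hy
      nlinarith
  · have h1 : (y : ℝ) ^ 2 ≤ (z : ℝ) := by exact_mod_cast h
    rw [abs_of_nonpos (by linarith), abs_of_nonneg (by linarith)]
    constructor
    · intro hx
      exfalso
      have hx2 : (0:ℝ) ≤ (x:ℝ)^2 := sq_nonneg _
      have hy : (0:ℝ) ≤ (y:ℝ) := Nat.cast_nonneg y
      nlinarith
    · rintro ⟨_, hz⟩; omega
end

section
/- For all natural numbers x, y, z, let T = x²·(y² - z) + x²·(1 - y² + z) + y (computed in the reals, so T = x² + y). Then (|x²·(y² - z)| + |1 - T|/2) / (|x²·(y² - z)| + |x²·(1 - y² + z)| + y + |1 - T|) > 1/2 if and only if x² > y and y² > z. -/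
theorem stmt_10 (x y z : ℕ) :
    let T : ℝ := (x : ℝ) ^ 2 * ((y : ℝ) ^ 2 - (z : ℝ)) +
                 (x : ℝ) ^ 2 * (1 - (y : ℝ) ^ 2 + (z : ℝ)) + (y : ℝ)
    (|(x : ℝ) ^ 2 * ((y : ℝ) ^ 2 - (z : ℝ))| + |1 - T| / 2) /
      (|(x : ℝ) ^ 2 * ((y : ℝ) ^ 2 - (z : ℝ))| +
        |(x : ℝ) ^ 2 * (1 - (y : ℝ) ^ 2 + (z : ℝ))| + (y : ℝ) + |1 - T|) > 1 / 2 ↔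
      (y < x ^ 2 ∧ z < y ^ 2) := by
  intro T
  set A : ℝ := (x : ℝ) ^ 2 * ((y : ℝ) ^ 2 - (z : ℝ)) with hA
  set B : ℝ := (x : ℝ) ^ 2 * (1 - (y : ℝ) ^ 2 + (z : ℝ)) with hB
  have hAB : A + B = (x : ℝ) ^ 2 := by rw [hA, hB]; ring
  have hy0 : (0 : ℝ) ≤ (y : ℝ) := Nat.cast_nonneg y
  have hz0 : (0 : ℝ) ≤ (z : ℝ) := Nat.cast_nonneg z
  have hx2 : (0 : ℝ) ≤ (x : ℝ) ^ 2 := by positivity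
  -- denominator is positive
  have habsA : A ≤ |A| ∧ -A ≤ |A| := ⟨le_abs_self A, neg_le_abs A⟩
  have habsB : B ≤ |B| ∧ -B ≤ |B| := ⟨le_abs_self B, neg_le_abs B⟩
  have habsT : 1 - T ≤ |1 - T| ∧ -(1 - T) ≤ |1 - T| :=
    ⟨le_abs_self _, neg_le_abs _⟩
  have hTval : T = (x : ℝ) ^ 2 + (y : ℝ) := by simp only [T, hA, hB]; ring
  have hD : 0 < |A| + |B| + (y : ℝ) + |1 - T| := by
    rcases le_or_gt 1 T with h | h
    · have : 1 - T ≤ 0 := by linarith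
      nlinarith [habsT.2, abs_nonneg A, abs_nonneg B]
    · nlinarith [habsT.1, habsA.1, habsB.1, abs_nonneg A, abs_nonneg B]
  -- key reduction
  have key : (|A| + |1 - T| / 2) / (|A| + |B| + (y : ℝ) + |1 - T|) > 1 / 2 ↔
      |B| + (y : ℝ) < |A| := by
    rw [gt_iff_lt, lt_div_iff₀ hD]
    constructor <;> intro h <;> linarith
  rw [key]
  constructor
  · intro h
    -- first, A must be positive
    have hApos : 0 < A := by
      by_contra hc
      push_neg at hc
      have h1 : |A| = -A := abs_of_nonpos hc
      have h2 : B ≤ |B| := habsB.1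
      nlinarith
    have hx2pos : 0 < (x : ℝ) ^ 2 := by
      rcases hx2.lt_or_eq with h' | h'
      · exact h'
      · exfalso; rw [hA, ← h'] at hApos; simp at hApos
    have hyz : (z : ℝ) < (y : ℝ) ^ 2 := by
      by_contra hc
      push_neg at hc
      have : A ≤ 0 := by rw [hA]; nlinarith
      linarith
    have hzy : z < y ^ 2 := by exact_mod_cast (by push_cast; exact hyz : (z : ℝ) < ((y ^ 2 : ℕ) : ℝ))
    -- so (y:ℝ)^2 - z ≥ 1
    have h1 : (1 : ℝ) ≤ (y : ℝ) ^ 2 - (z : ℝ) := by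
      have : (z + 1 : ℕ) ≤ y ^ 2 := hzy
      have h' := (Nat.cast_le (α := ℝ)).2 this
      push_cast at h'; linarith
    have hAval : |A| = A := abs_of_pos hApos
    have hBval : |B| = A - (x : ℝ) ^ 2 := by
      have hBle : B ≤ 0 := by rw [hB]; nlinarith
      rw [abs_of_nonpos hBle]; linarith
    have hyx : (y : ℝ) < (x : ℝ) ^ 2 := by
      rw [hAval, hBval] at h; linarith
    refine ⟨?_, hzy⟩
    exact_mod_cast (by push_cast; exact hyx : (y : ℝ) < ((x ^ 2 : ℕ) : ℝ))
  · rintro ⟨h1, h2⟩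
    have hx2' : (y : ℝ) + 1 ≤ (x : ℝ) ^ 2 := by
      have : (y + 1 : ℕ) ≤ x ^ 2 := h1
      have := (Nat.cast_le (α := ℝ)).2 this
      push_cast at this; linarith
    have hyz : (z : ℝ) + 1 ≤ (y : ℝ) ^ 2 := by
      have : (z + 1 : ℕ) ≤ y ^ 2 := h2
      have := (Nat.cast_le (α := ℝ)).2 this
      push_cast at this; linarith
    have hx2pos : 0 < (x : ℝ) ^ 2 := by linarith
    have hAge : (x : ℝ) ^ 2 ≤ A := by rw [hA]; nlinarith
    have hAval : |A| = A := abs_of_pos (by linarith)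
    have hBle : B ≤ 0 := by rw [hB]; nlinarith
    have hBval : |B| = A - (x : ℝ) ^ 2 := by rw [abs_of_nonpos hBle]; linarith
    rw [hAval, hBval]
    linarith
end

section
/- For all natural numbers m and n, let T = 4m - 10n (computed in the integers, cast to the reals). Then (|m - n| + |m - 4n| + |1 - T|/2) / (|m - n| + |m - 2n| + |m - 3n| + |m - 4n| + |1 - T|) = 1/2 if and only if |m - n| + |m - 4n| = |m - 2n| + |m - 3n|. -/
theorem stmt_14 (m n : ℕ) :
    let T : ℤ := 4 * (m : ℤ) - 10 * (n : ℤ)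
    (|(m : ℝ) - (n : ℝ)| + |(m : ℝ) - 4 * (n : ℝ)| + |1 - (T : ℝ)| / 2) /
      (|(m : ℝ) - (n : ℝ)| + |(m : ℝ) - 2 * (n : ℝ)| + |(m : ℝ) - 3 * (n : ℝ)| +
        |(m : ℝ) - 4 * (n : ℝ)| + |1 - (T : ℝ)|) = 1 / 2 ↔
      |(m : ℤ) - (n : ℤ)| + |(m : ℤ) - 4 * (n : ℤ)| =
        |(m : ℤ) - 2 * (n : ℤ)| + |(m : ℤ) - 3 * (n : ℤ)| := by
  intro T
  have hT : ((T : ℝ)) = 4 * (m : ℝ) - 10 * (n : ℝ) := by simp [T]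
  set A := |(m : ℝ) - (n : ℝ)| with hA
  set B := |(m : ℝ) - 2 * (n : ℝ)| with hB
  set C := |(m : ℝ) - 3 * (n : ℝ)| with hC
  set D := |(m : ℝ) - 4 * (n : ℝ)| with hD
  set E := |1 - (T : ℝ)| with hE
  have hR : (|(m : ℤ) - (n : ℤ)| + |(m : ℤ) - 4 * (n : ℤ)| =
      |(m : ℤ) - 2 * (n : ℤ)| + |(m : ℤ) - 3 * (n : ℤ)|) ↔ A + D = B + C := by
    rw [← @Int.cast_inj ℝ]
    push_cast
    rw [hA, hB, hC, hD]
  have habs : |(T : ℝ)| ≤ A + B + C + D := by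
    calc |(T : ℝ)| = |((m : ℝ) - n) + ((m : ℝ) - 2 * n) + ((m : ℝ) - 3 * n) +
        ((m : ℝ) - 4 * n)| := by rw [hT]; ring_nf
      _ ≤ _ := by
        rw [hA, hB, hC, hD]
        calc _ ≤ |((m : ℝ) - n) + ((m : ℝ) - 2 * n) + ((m : ℝ) - 3 * n)| +
              |(m : ℝ) - 4 * n| := abs_add_le _ _
          _ ≤ |((m : ℝ) - n) + ((m : ℝ) - 2 * n)| + |(m : ℝ) - 3 * n| +
              |(m : ℝ) - 4 * n| := by gcongr; exact abs_add_le _ _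
          _ ≤ _ := by gcongr; exact abs_add_le _ _
  have h1 : (1 : ℝ) ≤ |(T : ℝ)| + E := by
    calc (1 : ℝ) = |(T : ℝ) + (1 - (T : ℝ))| := by norm_num
      _ ≤ |(T : ℝ)| + |1 - (T : ℝ)| := abs_add_le _ _
      _ = _ := by rw [hE]
  have hden : (1 : ℝ) ≤ A + B + C + D + E := by linarith
  have hne : A + B + C + D + E ≠ 0 := by linarith
  rw [div_eq_iff hne, hR]
  constructor <;> intro h <;> linarith
end
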